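/- If 2 * n^{d-k-1} > 3^d - 1, it is not possible to attack all board positions of the d-dimensional chess space of size n using n^k queens; formally, if k + 1 ≤ d and 2 * n^{d-k-1} > 3^d - 1, then for every finite set Q of board positions with |Q| ≤ n^k there exists a board position x : Fin d → Fin n that is not in Q and is not attacked by any queen in Q. -/

import Mathlib

/-- An attack vector in a `d`-dimensional chess space: a function `δ : Fin d → ℤ`
with every component in `{-1, 0, 1}` and not identically zero. -/
def IsAttackVector (d : ℕ) (δ : Fin d → ℤ) : Prop :=
  (∀ i, δ i ∈ ({-1, 0, 1} : Set ℤ)) ∧ δ ≠ 0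

/-- A queen at `q` attacks a board position `x` if `x ≠ q` and `x` lies at a
positive scalar distance from `q` along some attack vector. -/
def Attacks {n d : ℕ} (q x : Fin d → Fin n) : Prop :=
  x ≠ q ∧ ∃ δ : Fin d → ℤ, IsAttackVector d δ ∧
    ∃ s : ℤ, 0 < s ∧ ∀ i, (x i : ℤ) = (q i : ℤ) + s * δ i

/-!
Every square attacked by a queen `q` lies on a ray `q + s • δ` (`s > 0`) for an attack vector
`δ`. The two opposite rays along `±δ` form a line, which meets the board in at most `n - 1`
squares other than `q`, because a coordinate `j` with `δ j ≠ 0` already determines the point.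
Pairing `δ` with `-δ`, a queen covers at most `(3 ^ d - 1) (n - 1) / 2 + 1 < n ^ (d - k)` squares
(itself included), so `n ^ k` queens cover fewer than all `n ^ d` squares.
-/

open Finset

section Counting

variable {n d : ℕ}

def attackVectors (d : ℕ) : Finset (Fin d → ℤ) :=
  (Fintype.piFinset fun _ => ({-1, 0, 1} : Finset ℤ)).erase 0

theorem mem_attackVectors {δ : Fin d → ℤ} : δ ∈ attackVectors d ↔ IsAttackVector d δ := by
  simp [attackVectors, IsAttackVector, and_comm]

theorem card_attackVectors : #(attackVectors d) = 3 ^ d - 1 := by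
  rw [attackVectors, card_erase_of_mem (by simp), Fintype.card_piFinset]
  simp

theorem neg_mem_attackVectors {δ : Fin d → ℤ} (hδ : δ ∈ attackVectors d) :
    -δ ∈ attackVectors d := by
  rw [mem_attackVectors] at hδ ⊢
  obtain ⟨hmem, hne⟩ := hδ
  refine ⟨fun i => ?_, neg_ne_zero.mpr hne⟩
  simp only [Set.mem_insert_iff, Set.mem_singleton_iff] at hmem ⊢
  rcases hmem i with h | h | h <;> simp [h]

open Classical in
noncomputable def ray (q : Fin d → Fin n) (δ : Fin d → ℤ) : Finset (Fin d → Fin n) :=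
  univ.filter fun x => ∃ s : ℤ, 0 < s ∧ ∀ i, (x i : ℤ) = q i + s * δ i

open Classical in
noncomputable def line (q : Fin d → Fin n) (δ : Fin d → ℤ) : Finset (Fin d → Fin n) :=
  univ.filter fun x => ∃ s : ℤ, s ≠ 0 ∧ ∀ i, (x i : ℤ) = q i + s * δ i

theorem mem_ray {q x : Fin d → Fin n} {δ : Fin d → ℤ} :
    x ∈ ray q δ ↔ ∃ s : ℤ, 0 < s ∧ ∀ i, (x i : ℤ) = q i + s * δ i := by
  simp [ray]

theorem mem_line {q x : Fin d → Fin n} {δ : Fin d → ℤ} :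
    x ∈ line q δ ↔ ∃ s : ℤ, s ≠ 0 ∧ ∀ i, (x i : ℤ) = q i + s * δ i := by
  simp [line]

theorem disjoint_ray_ray_neg {q : Fin d → Fin n} {δ : Fin d → ℤ} (hδ : δ ≠ 0) :
    Disjoint (ray q δ) (ray q (-δ)) := by
  refine disjoint_left.mpr fun x hx hx' => hδ ?_
  obtain ⟨s, hs, hxs⟩ := mem_ray.mp hx
  obtain ⟨t, ht, hxt⟩ := mem_ray.mp hx'
  funext i
  have : (s + t) * δ i = 0 := by linarith [hxs i, hxt i, show t * (-δ) i = -(t * δ i) by simp]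
  exact (mul_eq_zero.mp this).resolve_left (by omega)

theorem ray_union_ray_neg_subset (q : Fin d → Fin n) (δ : Fin d → ℤ) :
    ray q δ ∪ ray q (-δ) ⊆ line q δ := by
  intro x hx
  rw [mem_line]
  rcases mem_union.mp hx with hx | hx <;> obtain ⟨s, hs, hxs⟩ := mem_ray.mp hx
  · exact ⟨s, hs.ne', hxs⟩
  · exact ⟨-s, by omega, fun i => by simpa using hxs i⟩

theorem card_line_le (q : Fin d → Fin n) {δ : Fin d → ℤ} (hδ : δ ≠ 0) :
    #(line q δ) ≤ n - 1 := by
  obtain ⟨j, hj⟩ := Function.ne_iff.mp hδ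
  calc #(line q δ) ≤ #(univ.erase (q j)) := by
        refine card_le_card_of_injOn (· j) (fun x hx => ?_) (fun x hx y hy hxy => ?_)
        · obtain ⟨s, hs, hxs⟩ := mem_line.mp hx
          refine mem_erase.mpr ⟨fun h => ?_, mem_univ _⟩
          have := hxs j
          simp_all
        · obtain ⟨s, -, hxs⟩ := mem_line.mp hx
          obtain ⟨t, -, hyt⟩ := mem_line.mp hy
          have hst : s = t :=
            mul_right_cancel₀ hj (by linarith [hxs j, hyt j, congrArg Fin.val hxy])
          funext i
          exact Fin.ext (by exact_mod_cast (hxs i).trans (hst ▸ hyt i).symm)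
    _ = n - 1 := by simp

theorem two_mul_sum_card_ray_le (q : Fin d → Fin n) :
    2 * ∑ δ ∈ attackVectors d, #(ray q δ) ≤ (3 ^ d - 1) * (n - 1) := by
  have hneg : ∑ δ ∈ attackVectors d, #(ray q (-δ)) = ∑ δ ∈ attackVectors d, #(ray q δ) :=
    sum_nbij' Neg.neg Neg.neg (fun _ => neg_mem_attackVectors) (fun _ => neg_mem_attackVectors)
      (by simp) (by simp) (by simp)
  calc 2 * ∑ δ ∈ attackVectors d, #(ray q δ)
      = ∑ δ ∈ attackVectors d, #(ray q δ ∪ ray q (-δ)) := by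
        rw [two_mul]
        nth_rw 2 [← hneg]
        rw [← sum_add_distrib]
        refine sum_congr rfl fun δ hδ => ?_
        rw [card_union_of_disjoint (disjoint_ray_ray_neg (mem_attackVectors.mp hδ).2)]
    _ ≤ ∑ δ ∈ attackVectors d, (n - 1) := by
        refine sum_le_sum fun δ hδ => ?_
        exact (card_le_card (ray_union_ray_neg_subset q δ)).trans
          (card_line_le q (mem_attackVectors.mp hδ).2)
    _ = (3 ^ d - 1) * (n - 1) := by rw [sum_const, card_attackVectors, smul_eq_mul]

noncomputable def covered (q : Fin d → Fin n) : Finset (Fin d → Fin n) :=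
  insert q ((attackVectors d).biUnion (ray q))

theorem mem_covered_of_attacks {q x : Fin d → Fin n} (h : Attacks q x) : x ∈ covered q := by
  obtain ⟨-, δ, hδ, s, hs, hx⟩ := h
  exact mem_insert_of_mem <|
    mem_biUnion.mpr ⟨δ, mem_attackVectors.mpr hδ, mem_ray.mpr ⟨s, hs, hx⟩⟩

theorem two_mul_card_covered_le (q : Fin d → Fin n) :
    2 * #(covered q) ≤ (3 ^ d - 1) * (n - 1) + 2 := by
  have := two_mul_sum_card_ray_le q
  have := card_insert_le q ((attackVectors d).biUnion (ray q))
  have := card_biUnion_le (s := attackVectors d) (t := ray q)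
  rw [covered]
  omega

end Counting

theorem lt_pow_succ_of_two_mul_le {a c n m : ℕ} (hn : 2 ≤ n) (h : a < 2 * n ^ m)
    (hc : 2 * c ≤ a * (n - 1) + 2) : c < n ^ (m + 1) := by
  have hN : 1 ≤ n ^ m := Nat.one_le_pow _ _ (by omega)
  obtain ⟨n, rfl⟩ : ∃ n', n = n' + 1 := ⟨n - 1, by omega⟩
  rw [pow_succ]
  simp only [Nat.add_sub_cancel] at hc
  nlinarith

theorem nk_queens_do_not_suffice (n d k : ℕ) (hkd : k + 1 ≤ d)
    (h : 2 * n ^ (d - k - 1) > 3 ^ d - 1)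
    (Q : Finset (Fin d → Fin n)) (hQ : Q.card ≤ n ^ k) :
    ∃ x : Fin d → Fin n, x ∉ Q ∧ ∀ q ∈ Q, ¬ Attacks q x := by
  have hn : 1 < n := by
    have : 3 ≤ 3 ^ d := Nat.le_self_pow (by omega) 3
    exact lt_of_pow_lt_pow_left₀ (d - k - 1) n.zero_le (by rw [one_pow]; omega)
  have hcovered (q : Fin d → Fin n) : #(covered q) < n ^ (d - k) := by
    rw [show d - k = d - k - 1 + 1 by omega]
    exact lt_pow_succ_of_two_mul_le hn h (two_mul_card_covered_le q)
  have hcard : #(Q.biUnion covered) < #(univ : Finset (Fin d → Fin n)) := calc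
    #(Q.biUnion covered) ≤ #Q * (n ^ (d - k) - 1) :=
      card_biUnion_le_card_mul _ _ _ fun q _ => by have := hcovered q; omega
    _ ≤ n ^ k * (n ^ (d - k) - 1) := Nat.mul_le_mul_right _ hQ
    _ < n ^ k * n ^ (d - k) :=
      Nat.mul_lt_mul_of_pos_left (Nat.sub_lt (by positivity) one_pos) (by positivity)
    _ = #(univ : Finset (Fin d → Fin n)) := by
      rw [← pow_add, Nat.add_sub_cancel' (by omega), card_univ, Fintype.card_fun]
      simp
  obtain ⟨x, -, hx⟩ := exists_mem_notMem_of_card_lt_card hcard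
  exact ⟨x, fun hxQ => hx (mem_biUnion.mpr ⟨x, hxQ, mem_insert_self x _⟩),
    fun q hq hqx => hx (mem_biUnion.mpr ⟨q, hq, mem_covered_of_attacks hqx⟩)⟩
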